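/- arXiv:2605.02448 — 3 statements merged into one kernel-verified Lean document; each statement's English description precedes it below -/
import Mathlib

section
/- With H as above, for every common-shift direction h = (u,…,u) with u ≠ 0, the quadratic form equals ‖u‖²/τ² > 0; and H restricted to the zero-sum subspace { h : Σ_ℓ h_ℓ = 0 } is positive semidefinite if and only if τ² I_d - M ⪰ 0, i.e. τ² ≥ λ_max(M). -/
/-!
With `A = (τ²I - M)/(Kτ⁴)` and `B = M/(K²τ⁴)` every block is `H k j = δ_kj A + B`, so the
quadratic form of `h` is `∑ₖ hₖ·A hₖ + s·B s` with `s = ∑ₖ hₖ`. On a common shift it is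
`u·(K A + K² B) u = ‖u‖²/τ²`. On the zero-sum subspace only `∑ₖ hₖ·A hₖ` survives, and testing
with `h = (v, -v, 0, …, 0)` shows it is nonnegative iff `A ⪰ 0`, i.e.
iff `τ²I - M ⪰ 0`. Finally `τ²I - M` is unitarily similar to `diag (τ² - λᵢ)`.
-/

open Matrix Finset
open scoped ComplexOrder

section BlockQuadraticForm

variable {ι n R : Type*} [Fintype ι] [Fintype n]

theorem sum_sum_dotProduct_mulVec_const [CommSemiring R] (H : ι → ι → Matrix n n R)
    (u : n → R) :
    ∑ k, ∑ j, u ⬝ᵥ H k j *ᵥ u = u ⬝ᵥ (∑ k, ∑ j, H k j) *ᵥ u := by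
  simp only [sum_mulVec, dotProduct_sum]

omit [Fintype n] in
theorem sum_sum_ite_add [AddCommMonoid R] [DecidableEq ι] (A B : Matrix n n R) :
    ∑ k : ι, ∑ j : ι, ((if k = j then A else 0) + B)
      = Fintype.card ι • A + Fintype.card ι ^ 2 • B := by
  simp [sum_add_distrib, sum_const, card_univ, pow_two, mul_smul]

theorem sum_sum_dotProduct_ite_add_mulVec [CommSemiring R] [DecidableEq ι]
    (A B : Matrix n n R) (h : ι → n → R) :
    ∑ k, ∑ j, h k ⬝ᵥ ((if k = j then A else 0) + B) *ᵥ h j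
      = ∑ k, h k ⬝ᵥ A *ᵥ h k + (∑ k, h k) ⬝ᵥ B *ᵥ ∑ k, h k := by
  simp only [add_mulVec, dotProduct_add, sum_add_distrib]
  congr 1
  · refine sum_congr rfl fun k _ => ?_
    rw [sum_eq_single k (fun j _ hjk => by simp [Ne.symm hjk]) (by simp), if_pos rfl]
  · rw [sum_dotProduct]
    simp only [mulVec_sum, dotProduct_sum]

theorem forall_sum_eq_zero_sum_nonneg_iff {V : Type*} [Nontrivial ι] [AddCommGroup V]
    [AddCommGroup R] [LinearOrder R] [IsOrderedAddMonoid R] (q : V → R) (hq0 : q 0 = 0)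
    (hq : ∀ v, q (-v) = q v) :
    (∀ h : ι → V, ∑ i, h i = 0 → 0 ≤ ∑ i, q (h i)) ↔ ∀ v, 0 ≤ q v := by
  classical
  refine ⟨fun H v => ?_, fun H h _ => sum_nonneg fun i _ => H (h i)⟩
  obtain ⟨i, j, hij⟩ := exists_pair_ne ι
  set h : ι → V := Pi.single i v + Pi.single j (-v)
  have hi : h i = v := by simp [h, hij.symm]
  have hj : h j = -v := by simp [h, hij]
  have hk : ∀ k, k ≠ i ∧ k ≠ j → h k = 0 := fun k hk => by simp [h, hk.1, hk.2]
  have := H h (by rw [Fintype.sum_eq_add i j hij hk, hi, hj, add_neg_cancel])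
  rw [Fintype.sum_eq_add i j hij (fun k hk' => by rw [hk k hk', hq0]), hi, hj, hq] at this
  by_contra! hv
  exact this.not_gt (add_neg hv hv)

theorem forall_sum_eq_zero_dotProduct_ite_add_mulVec_nonneg_iff [CommRing R] [LinearOrder R]
    [IsOrderedRing R] [StarRing R] [TrivialStar R] [Nontrivial ι] [DecidableEq ι]
    {A : Matrix n n R} (hA : A.IsHermitian) (B : Matrix n n R) :
    (∀ h : ι → n → R, ∑ i, h i = 0 →
        0 ≤ ∑ k, ∑ j, h k ⬝ᵥ ((if k = j then A else 0) + B) *ᵥ h j)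
      ↔ A.PosSemidef := by
  have hzero (h : ι → n → R) (hs : ∑ i, h i = 0) :
      ∑ k, ∑ j, h k ⬝ᵥ ((if k = j then A else 0) + B) *ᵥ h j = ∑ k, h k ⬝ᵥ A *ᵥ h k := by
    rw [sum_sum_dotProduct_ite_add_mulVec, hs, zero_dotProduct, add_zero]
  rw [posSemidef_iff_dotProduct_mulVec, and_iff_right hA]
  simp only [star_trivial]
  rw [← forall_sum_eq_zero_sum_nonneg_iff (ι := ι) _ (by simp) (by simp [mulVec_neg])]
  exact forall_congr' fun h => imp_congr_right fun hs => by rw [hzero h hs]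

end BlockQuadraticForm

theorem Matrix.posSemidef_smul_iff {n 𝕜 : Type*} [Fintype n] [RCLike 𝕜] {A : Matrix n n 𝕜}
    {c : ℝ} (hc : 0 < c) : (c • A).PosSemidef ↔ A.PosSemidef := by
  refine ⟨fun h => ?_, fun h => h.smul hc.le⟩
  simpa [smul_smul, hc.ne'] using h.smul (inv_nonneg.2 hc.le)

theorem Matrix.IsHermitian.posSemidef_smul_one_sub_iff {n 𝕜 : Type*} [Fintype n] [DecidableEq n]
    [RCLike 𝕜] {A : Matrix n n 𝕜} (hA : A.IsHermitian) (t : ℝ) :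
    (t • (1 : Matrix n n 𝕜) - A).PosSemidef ↔ ∀ i, hA.eigenvalues i ≤ t := by
  have hdiag : diagonal (RCLike.ofReal ∘ fun i => t - hA.eigenvalues i)
      = (t : 𝕜) • (1 : Matrix n n 𝕜) - diagonal (RCLike.ofReal ∘ hA.eigenvalues) := by
    rw [smul_one_eq_diagonal, diagonal_sub]
    congr 1
    ext i
    simp
  have hconj : t • (1 : Matrix n n 𝕜) - A = Unitary.conjStarAlgAut 𝕜 _ hA.eigenvectorUnitary
      (diagonal (RCLike.ofReal ∘ fun i => t - hA.eigenvalues i)) := by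
    rw [hdiag, map_sub, map_smul, map_one, ← hA.spectral_theorem,
      RCLike.real_smul_eq_coe_smul (K := 𝕜)]
  rw [hconj]
  simp [Unitary.isUnit_coe.posSemidef_star_right_conjugate_iff, posSemidef_diagonal_iff]

theorem ite_smul_one_sub_smul_eq_ite_add {ι n : Type*} [DecidableEq ι] [DecidableEq n]
    {K τ : ℝ} (hK : K ≠ 0) (hτ : τ ≠ 0) (M : Matrix n n ℝ) (k j : ι) :
    (if k = j then (1 / (K * τ ^ 2)) • (1 : Matrix n n ℝ) - ((K - 1) / (K ^ 2 * τ ^ 4)) • M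
      else (1 / (K ^ 2 * τ ^ 4)) • M)
      = (if k = j then (1 / (K * τ ^ 4)) • (τ ^ 2 • (1 : Matrix n n ℝ) - M) else 0)
        + (1 / (K ^ 2 * τ ^ 4)) • M := by
  split_ifs
  · match_scalars <;> field_simp; ring
  · rw [zero_add]

theorem block_hessian_shift_and_zero_sum_general
    (K d : ℕ) (hK : 2 ≤ K) (τ : ℝ) (hτ : 0 < τ)
    (M : Matrix (Fin d) (Fin d) ℝ) (hpsd : M.PosSemidef) :
    let H : Fin K → Fin K → Matrix (Fin d) (Fin d) ℝ := fun k j =>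
      if k = j then
        (1 / ((K : ℝ) * τ ^ 2)) • (1 : Matrix (Fin d) (Fin d) ℝ)
          - (((K : ℝ) - 1) / ((K : ℝ) ^ 2 * τ ^ 4)) • M
      else (1 / ((K : ℝ) ^ 2 * τ ^ 4)) • M
    (∀ u : Fin d → ℝ, u ≠ 0 →
        (∑ k, ∑ j, u ⬝ᵥ (H k j) *ᵥ u) = (u ⬝ᵥ u) / τ ^ 2
          ∧ 0 < (u ⬝ᵥ u) / τ ^ 2)
      ∧ (((∀ h : Fin K → (Fin d → ℝ), (∑ ℓ, h ℓ) = 0 →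
              0 ≤ ∑ k, ∑ j, h k ⬝ᵥ (H k j) *ᵥ h j)
            ↔ (τ ^ 2 • (1 : Matrix (Fin d) (Fin d) ℝ) - M).PosSemidef)
          ∧ ((τ ^ 2 • (1 : Matrix (Fin d) (Fin d) ℝ) - M).PosSemidef
            ↔ ∀ i : Fin d, hpsd.1.eigenvalues i ≤ τ ^ 2)) := by
  intro H
  have hK0 : (K : ℝ) ≠ 0 := by norm_cast; omega
  have : Nontrivial (Fin K) := Fin.nontrivial_iff_two_le.mpr hK
  set N := τ ^ 2 • (1 : Matrix (Fin d) (Fin d) ℝ) - M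
  set A := (1 / ((K : ℝ) * τ ^ 4)) • N
  set B := (1 / ((K : ℝ) ^ 2 * τ ^ 4)) • M
  have hH : H = fun k j => (if k = j then A else 0) + B :=
    funext₂ fun k j => ite_smul_one_sub_smul_eq_ite_add hK0 hτ.ne' M k j
  have hN : N.IsHermitian := (isHermitian_one.smul (.all _)).sub hpsd.1
  refine ⟨fun u hu => ⟨?_, ?_⟩, ?_, hpsd.1.posSemidef_smul_one_sub_iff _⟩
  · have hsum : K • A + K ^ 2 • B = (τ ^ 2)⁻¹ • (1 : Matrix (Fin d) (Fin d) ℝ) := by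
      simp only [← Nat.cast_smul_eq_nsmul ℝ, Nat.cast_pow, A, B, N]
      match_scalars <;> field_simp; ring
    rw [sum_sum_dotProduct_mulVec_const, hH, sum_sum_ite_add, Fintype.card_fin, hsum,
      smul_mulVec, one_mulVec, dotProduct_smul, smul_eq_mul, inv_mul_eq_div]
  · exact div_pos (by simpa using dotProduct_star_self_pos_iff.mpr hu) (by positivity)
  · rw [hH, forall_sum_eq_zero_dotProduct_ite_add_mulVec_nonneg_iff (hN.smul (.all _))]
    exact posSemidef_smul_iff (by positivity)

/-- on common-shift directions the block-Hessian quadratic form equals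
`‖u‖²/τ² > 0`, and positive semidefiniteness on the zero-sum subspace is equivalent
to `τ² I - M ⪰ 0`, i.e. to all eigenvalues of `M` being at most `τ²`. -/
theorem block_hessian_shift_and_zero_sum
    (K d : ℕ) (hK : 2 ≤ K) (hd : 1 ≤ d) (τ : ℝ) (hτ : 0 < τ)
    (M : Matrix (Fin d) (Fin d) ℝ) (hsym : M.IsSymm) (hpsd : M.PosSemidef) :
    let H : Fin K → Fin K → Matrix (Fin d) (Fin d) ℝ := fun k j =>
      if k = j then
        (1 / ((K : ℝ) * τ ^ 2)) • (1 : Matrix (Fin d) (Fin d) ℝ)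
          - (((K : ℝ) - 1) / ((K : ℝ) ^ 2 * τ ^ 4)) • M
      else (1 / ((K : ℝ) ^ 2 * τ ^ 4)) • M
    (∀ u : Fin d → ℝ, u ≠ 0 →
        (∑ k, ∑ j, u ⬝ᵥ (H k j) *ᵥ u) = (u ⬝ᵥ u) / τ ^ 2
          ∧ 0 < (u ⬝ᵥ u) / τ ^ 2)
      ∧ (((∀ h : Fin K → (Fin d → ℝ), (∑ ℓ, h ℓ) = 0 →
              0 ≤ ∑ k, ∑ j, h k ⬝ᵥ (H k j) *ᵥ h j)
            ↔ (τ ^ 2 • (1 : Matrix (Fin d) (Fin d) ℝ) - M).PosSemidef)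
          ∧ ((τ ^ 2 • (1 : Matrix (Fin d) (Fin d) ℝ) - M).PosSemidef
            ↔ ∀ i : Fin d, hpsd.1.eigenvalues i ≤ τ ^ 2)) :=
  block_hessian_shift_and_zero_sum_general K d hK τ hτ M hpsd
end

section
/- Under the same setting, combining the previous bound with Pinsker's inequality and the identity D_KL(P ‖ P_L ⊗ P_Y) = I(L;Y), the Bayes misclassification probability satisfies P_err* ≥ 1 - 1/K - √(I(L;Y)/2). -/
open MeasureTheory InformationTheory Real Set
open scoped ENNReal

/-!
For a measurable decision rule `ψ` let `A = {(ℓ, y) | ψ y = ℓ}`. Since `L` is uniform, the joint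
law `P'` of `(L, Y)` is at most `K` times the product `Q` of the marginals; hence `P' ≪ Q` with a
bounded density, so `I = KL(P' ‖ Q)` is finite, and `Q A = 1/K`. Coarsening both laws to the
partition `{A, Aᶜ}` can only decrease the divergence (Jensen for `klFun` on each piece), and the
binary Pinsker inequality then gives `P' A - 1/K ≤ √(I/2)`, while `1 - P' A` is the error of `ψ`.
-/

noncomputable def binaryKL (p q : ℝ) : ℝ :=
  p * log (p / q) + (1 - p) * log ((1 - p) / (1 - q))

lemma mul_log_div_eq_sub {p q : ℝ} (hq : q ≠ 0) : p * log (p / q) = p * log p - p * log q := by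
  rcases eq_or_ne p 0 with rfl | hp
  · simp
  · rw [log_div hp hq]; ring

lemma monotoneOn_log_sub_log_one_sub_sub_four_mul :
    MonotoneOn (fun x => log x - log (1 - x) - 4 * x) (Ioo 0 1) := by
  have hderiv : ∀ x ∈ Ioo (0 : ℝ) 1,
      HasDerivAt (fun x => log x - log (1 - x) - 4 * x) (x⁻¹ + (1 - x)⁻¹ - 4) x := by
    intro x ⟨hx0, hx1⟩
    have h := ((hasDerivAt_log hx0.ne').sub
      (((hasDerivAt_id' x).const_sub 1).log (by linarith))).sub ((hasDerivAt_id' x).const_mul 4)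
    exact h.congr_deriv (by ring)
  refine monotoneOn_of_deriv_nonneg (convex_Ioo 0 1)
    (fun x hx => (hderiv x hx).continuousAt.continuousWithinAt)
    (fun x hx => (hderiv x (interior_subset hx)).differentiableAt.differentiableWithinAt)
    fun x hx => ?_
  rw [interior_Ioo] at hx
  obtain ⟨hx0, hx1⟩ := hx
  rw [(hderiv x ⟨hx0, hx1⟩).deriv]
  have h1x : 0 < 1 - x := by linarith
  have : x⁻¹ + (1 - x)⁻¹ - 4 = (2 * x - 1) ^ 2 / (x * (1 - x)) := by field_simp; ring
  rw [this]
  positivity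

lemma binaryKL_eq {q : ℝ} (hq : q ∈ Ioo 0 1) (p : ℝ) :
    binaryKL p q = p * log p + (1 - p) * log (1 - p) - p * log q - (1 - p) * log (1 - q) := by
  rw [binaryKL, mul_log_div_eq_sub hq.1.ne', mul_log_div_eq_sub (by linarith [hq.2])]
  ring

lemma hasDerivAt_binaryKL_sub_two_mul_sq {p q : ℝ} (hp : p ∈ Ioo 0 1) (hq : q ∈ Ioo 0 1) :
    HasDerivAt (fun x => binaryKL x q - 2 * (x - q) ^ 2)
      ((log p - log (1 - p) - 4 * p) - (log q - log (1 - q) - 4 * q)) p := by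
  simp_rw [binaryKL_eq hq]
  have h1p : 1 - p ≠ 0 := by linarith [hp.2]
  have h := ((((hasDerivAt_mul_log hp.1.ne').add
    ((hasDerivAt_mul_log h1p).comp p ((hasDerivAt_id' p).const_sub 1))).sub
    ((hasDerivAt_id' p).mul_const (log q))).sub
    (((hasDerivAt_id' p).const_sub 1).mul_const (log (1 - q)))).sub
    ((((hasDerivAt_id' p).sub_const q).pow 2).const_mul 2)
  refine h.congr_deriv ?_
  push_cast
  ring

lemma convexOn_binaryKL_sub_two_mul_sq {q : ℝ} (hq : q ∈ Ioo 0 1) :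
    ConvexOn ℝ (Icc 0 1) (fun x => binaryKL x q - 2 * (x - q) ^ 2) := by
  have hcont : Continuous (fun x => binaryKL x q - 2 * (x - q) ^ 2) := by
    simp_rw [binaryKL_eq hq]
    have hmul_log := continuous_mul_log
    fun_prop
  refine MonotoneOn.convexOn_of_deriv (convex_Icc 0 1) hcont.continuousOn ?_ ?_ <;>
    rw [interior_Icc]
  · exact fun x hx =>
      (hasDerivAt_binaryKL_sub_two_mul_sq hx hq).differentiableAt.differentiableWithinAt
  · intro x hx y hy hxy
    rw [(hasDerivAt_binaryKL_sub_two_mul_sq hx hq).deriv,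
      (hasDerivAt_binaryKL_sub_two_mul_sq hy hq).deriv]
    linarith [monotoneOn_log_sub_log_one_sub_sub_four_mul hx hy hxy]

theorem two_mul_sq_sub_le_binaryKL {p q : ℝ} (hp : p ∈ Icc 0 1) (hq : q ∈ Ioo 0 1) :
    2 * (p - q) ^ 2 ≤ binaryKL p q := by
  have hmin : IsMinOn (fun x => binaryKL x q - 2 * (x - q) ^ 2) (Icc 0 1) q := by
    refine (convexOn_binaryKL_sub_two_mul_sq hq).isMinOn_of_rightDeriv_eq_zero
      (by rwa [interior_Icc]) ?_
    rw [(hasDerivAt_binaryKL_sub_two_mul_sq hq hq).hasDerivWithinAt.derivWithin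
      (uniqueDiffWithinAt_Ioi q), sub_self]
  have hq0 : binaryKL q q = 0 := by
    simp [binaryKL, div_self hq.1.ne', div_self (show 1 - q ≠ 0 by linarith [hq.2])]
  have h : binaryKL q q - 2 * (q - q) ^ 2 ≤ binaryKL p q - 2 * (p - q) ^ 2 := hmin hp
  rw [hq0, sub_self] at h
  linarith

lemma mul_klFun_div {p q : ℝ} (h : q = 0 → p = 0) :
    q * klFun (p / q) = p * log (p / q) + q - p := by
  rcases eq_or_ne q 0 with rfl | hq
  · simp [h rfl]
  · rw [klFun_apply]
    field_simp

section KL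

variable {α : Type*} [MeasurableSpace α] {μ ν : Measure α}

lemma MeasureTheory.Measure.AbsolutelyContinuous.measureReal_eq_zero
    [IsFiniteMeasure μ] [IsFiniteMeasure ν] (hμν : μ ≪ ν) {s : Set α} (hs : ν.real s = 0) :
    μ.real s = 0 := by
  rw [measureReal_eq_zero_iff] at hs ⊢
  exact hμν hs

lemma rnDeriv_le_of_le_smul [SigmaFinite μ] [SigmaFinite ν] {c : ℝ≥0∞} (h : μ ≤ c • ν) :
    μ.rnDeriv ν ≤ᵐ[ν] fun _ => c := by
  refine ae_le_of_forall_setLIntegral_le_of_sigmaFinite (Measure.measurable_rnDeriv μ ν)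
    fun s hs _ => ?_
  rw [Measure.setLIntegral_rnDeriv (Measure.absolutelyContinuous_of_le_smul h), setLIntegral_const]
  exact h s

lemma integrable_llr_of_le_smul [IsFiniteMeasure μ] [IsFiniteMeasure ν] {c : ℝ≥0∞} (hc : c ≠ ∞)
    (h : μ ≤ c • ν) : Integrable (llr μ ν) μ := by
  rw [← integrable_klFun_rnDeriv_iff (Measure.absolutelyContinuous_of_le_smul h)]
  obtain ⟨C, hC⟩ := isCompact_Icc.exists_bound_of_continuousOn
    (continuous_klFun.continuousOn (s := Icc 0 c.toReal))
  have hmeas := measurable_klFun.comp (Measure.measurable_rnDeriv μ ν).ennreal_toReal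
  refine Integrable.of_bound hmeas.aestronglyMeasurable C ?_
  filter_upwards [rnDeriv_le_of_le_smul h] with x hx
  exact hC _ ⟨ENNReal.toReal_nonneg, ENNReal.toReal_mono hc hx⟩

lemma measureReal_mul_klFun_le_setIntegral_klFun_rnDeriv [IsFiniteMeasure μ] [IsFiniteMeasure ν]
    (hμν : μ ≪ ν) (h_int : Integrable (llr μ ν) μ) {A : Set α} (hA : MeasurableSet A) :
    ν.real A * klFun (μ.real A / ν.real A) ≤ ∫ x in A, klFun (μ.rnDeriv ν x).toReal ∂ν := by
  have hrestrict : μ.restrict A = (ν.restrict A).withDensity (μ.rnDeriv ν) := by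
    conv_lhs => rw [← Measure.withDensity_rnDeriv_eq μ ν hμν]
    rw [restrict_withDensity hA]
  have hrn : (μ.restrict A).rnDeriv (ν.restrict A) =ᵐ[ν.restrict A] μ.rnDeriv ν := by
    rw [hrestrict]
    exact Measure.rnDeriv_withDensity _ (Measure.measurable_rnDeriv μ ν)
  have h_int' : Integrable (fun x => klFun (μ.rnDeriv ν x).toReal) (ν.restrict A) :=
    ((integrable_klFun_rnDeriv_iff hμν).2 h_int).restrict
  have hrn' := hrn.fun_comp fun t => klFun t.toReal
  calc ν.real A * klFun (μ.real A / ν.real A)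
      = (ν.restrict A).real univ * klFun ((μ.restrict A).real univ / (ν.restrict A).real univ) := by
        simp only [measureReal_restrict_apply_univ]
    _ ≤ ∫ x, klFun ((μ.restrict A).rnDeriv (ν.restrict A) x).toReal ∂(ν.restrict A) :=
        mul_le_integral_rnDeriv_of_ac convexOn_klFun continuous_klFun.continuousWithinAt
          ((integrable_congr hrn').2 h_int') (hμν.restrict A)
    _ = ∫ x in A, klFun (μ.rnDeriv ν x).toReal ∂ν := integral_congr_ae hrn'

lemma binaryKL_le_toReal_klDiv [IsProbabilityMeasure μ] [IsProbabilityMeasure ν]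
    (hμν : μ ≪ ν) (h_int : Integrable (llr μ ν) μ) {A : Set α} (hA : MeasurableSet A) :
    binaryKL (μ.real A) (ν.real A) ≤ (klDiv μ ν).toReal := by
  have hsplit := add_le_add
    (measureReal_mul_klFun_le_setIntegral_klFun_rnDeriv hμν h_int hA)
    (measureReal_mul_klFun_le_setIntegral_klFun_rnDeriv hμν h_int hA.compl)
  rw [integral_add_compl hA ((integrable_klFun_rnDeriv_iff hμν).2 h_int),
    ← toReal_klDiv_eq_integral_klFun hμν, mul_klFun_div hμν.measureReal_eq_zero,
    mul_klFun_div hμν.measureReal_eq_zero, probReal_compl_eq_one_sub hA,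
    probReal_compl_eq_one_sub hA] at hsplit
  rw [binaryKL]
  linarith

theorem measureReal_sub_le_sqrt_toReal_klDiv [IsProbabilityMeasure μ] [IsProbabilityMeasure ν]
    (hμν : μ ≪ ν) (h_int : Integrable (llr μ ν) μ) {A : Set α} (hA : MeasurableSet A) :
    μ.real A - ν.real A ≤ √((klDiv μ ν).toReal / 2) := by
  rcases (measureReal_nonneg : 0 ≤ ν.real A).eq_or_lt with hq0 | hq0
  · rw [← hq0, hμν.measureReal_eq_zero hq0.symm, sub_zero]
    exact sqrt_nonneg _
  rcases (measureReal_le_one : ν.real A ≤ 1).eq_or_lt with hq1 | hq1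
  · linarith [sqrt_nonneg ((klDiv μ ν).toReal / 2), (measureReal_le_one : μ.real A ≤ 1)]
  have hpinsker := (two_mul_sq_sub_le_binaryKL (p := μ.real A) (q := ν.real A)
    ⟨measureReal_nonneg, measureReal_le_one⟩ ⟨hq0, hq1⟩).trans
    (binaryKL_le_toReal_klDiv hμν h_int hA)
  exact (le_abs_self _).trans (abs_le_sqrt (by linarith))

end KL

section Joint

variable {Ω β γ : Type*} [MeasurableSpace Ω] [MeasurableSpace β] [MeasurableSpace γ]
  [Countable β] [MeasurableSingletonClass β]

lemma map_prodMk_le_smul_prod {P : Measure Ω} [IsFiniteMeasure P] {X : Ω → β} {Y : Ω → γ}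
    (hX : Measurable X) (hY : Measurable Y) {c : ℝ≥0∞} (hc : ∀ b, 1 ≤ c * P.map X {b}) :
    P.map (fun ω => (X ω, Y ω)) ≤ c • (P.map X).prod (P.map Y) := by
  refine Measure.le_iff.2 fun s hs => ?_
  rw [Measure.map_apply (hX.prodMk hY) hs, Measure.smul_apply, smul_eq_mul,
    Measure.prod_apply hs, lintegral_countable', ← ENNReal.tsum_mul_left]
  calc P ((fun ω => (X ω, Y ω)) ⁻¹' s)
      ≤ P (⋃ b, Y ⁻¹' (Prod.mk b ⁻¹' s)) := measure_mono fun ω hω => mem_iUnion.2 ⟨X ω, hω⟩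
    _ ≤ ∑' b, P.map Y (Prod.mk b ⁻¹' s) := by
        refine (measure_iUnion_le _).trans_eq (tsum_congr fun b => ?_)
        rw [Measure.map_apply hY (measurable_prodMk_left hs)]
    _ ≤ ∑' b, c * (P.map Y (Prod.mk b ⁻¹' s) * P.map X {b}) := by
        refine ENNReal.tsum_le_tsum fun b => ?_
        calc P.map Y (Prod.mk b ⁻¹' s) = 1 * P.map Y (Prod.mk b ⁻¹' s) := (one_mul _).symm
          _ ≤ c * P.map X {b} * P.map Y (Prod.mk b ⁻¹' s) := by gcongr; exact hc b
          _ = _ := by ring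

lemma prod_setOf_apply_snd_eq_fst {μ : Measure β} {ν : Measure γ} [IsProbabilityMeasure ν]
    {m : ℝ≥0∞} (hμ : ∀ b, μ {b} = m) {ψ : γ → β} (hψ : Measurable ψ) :
    μ.prod ν {x | ψ x.2 = x.1} = m := by
  have hsec (b : β) : Prod.mk b ⁻¹' {x : β × γ | ψ x.2 = x.1} = ψ ⁻¹' {b} := rfl
  have hmeas : MeasurableSet {x : β × γ | ψ x.2 = x.1} :=
    measurableSet_eq_fun (hψ.comp measurable_snd) measurable_fst
  rw [Measure.prod_apply hmeas, lintegral_countable']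
  simp_rw [hsec, hμ, ← Measure.map_apply hψ (measurableSet_singleton _)]
  have : IsProbabilityMeasure (ν.map ψ) := Measure.isProbabilityMeasure_map hψ.aemeasurable
  have htotal : ∑' b, ν.map ψ {b} = 1 := by
    simpa using (lintegral_countable' (μ := ν.map ψ) 1).symm
  rw [ENNReal.tsum_mul_right, htotal, one_mul]

end Joint

theorem fano_type_mutual_information_bound_general
    (K d : ℕ)
    {Ω : Type*} [MeasurableSpace Ω] (P : Measure Ω) [IsProbabilityMeasure P]
    (L : Ω → Fin K) (Y : Ω → (Fin d → ℝ)) (hL : Measurable L) (hY : Measurable Y)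
    (hunif : ∀ ℓ : Fin K, P {ω | L ω = ℓ} = 1 / (K : ℝ≥0∞)) :
    let P' : Measure (Fin K × (Fin d → ℝ)) := P.map (fun ω => (L ω, Y ω))
    let Q : Measure (Fin K × (Fin d → ℝ)) := (P.map L).prod (P.map Y)
    let I : ℝ := ∫ x, Real.log ((P'.rnDeriv Q x).toReal) ∂P'
    1 - 1 / (K : ℝ) - Real.sqrt (I / 2)
      ≤ ⨅ ψ : {ψ : (Fin d → ℝ) → Fin K // Measurable ψ},
          (P {ω | ψ.1 (Y ω) ≠ L ω}).toReal := by
  intro P' Q I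
  have : IsProbabilityMeasure (P.map L) := Measure.isProbabilityMeasure_map hL.aemeasurable
  have : IsProbabilityMeasure (P.map Y) := Measure.isProbabilityMeasure_map hY.aemeasurable
  have : IsProbabilityMeasure P' := Measure.isProbabilityMeasure_map (hL.prodMk hY).aemeasurable
  obtain ⟨ω₀⟩ := nonempty_of_isProbabilityMeasure P
  have hK : (K : ℝ≥0∞) ≠ 0 := by exact_mod_cast (L ω₀).pos.ne'
  have hlaw (ℓ : Fin K) : P.map L {ℓ} = (K : ℝ≥0∞)⁻¹ := by
    rw [Measure.map_apply hL (measurableSet_singleton ℓ), ← one_div]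
    exact hunif ℓ
  have hle : P' ≤ (K : ℝ≥0∞) • Q := map_prodMk_le_smul_prod hL hY fun ℓ => by
    rw [hlaw, ENNReal.mul_inv_cancel hK (ENNReal.natCast_ne_top K)]
  have hac : P' ≪ Q := Measure.absolutelyContinuous_of_le_smul hle
  have hI : I = (klDiv P' Q).toReal := (toReal_klDiv_of_measure_eq hac (by simp)).symm
  have : Nonempty {ψ : (Fin d → ℝ) → Fin K // Measurable ψ} :=
    ⟨⟨fun _ => L ω₀, measurable_const⟩⟩
  refine le_ciInf fun ⟨ψ, hψ⟩ => ?_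
  let A : Set (Fin K × (Fin d → ℝ)) := {x | ψ x.2 = x.1}
  have hA : MeasurableSet A := measurableSet_eq_fun (hψ.comp measurable_snd) measurable_fst
  have hQA : Q.real A = 1 / K := by
    simp [measureReal_def, Q, A, prod_setOf_apply_snd_eq_fst hlaw hψ]
  have herr : (P {ω | ψ (Y ω) ≠ L ω}).toReal = 1 - P'.real A := by
    rw [← probReal_compl_eq_one_sub hA, map_measureReal_apply (hL.prodMk hY) hA.compl]
    rfl
  have hpinsker := measureReal_sub_le_sqrt_toReal_klDiv hac
    (integrable_llr_of_le_smul (ENNReal.natCast_ne_top K) hle) hA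
  rw [hQA, ← hI] at hpinsker
  rw [herr]
  linarith

/-- with `L` uniform on `{0,…,K-1}` and mutual information
`I(L;Y) = D_KL(P_{L,Y} ‖ P_L ⊗ P_Y)`, the Bayes error satisfies
`P_err* ≥ 1 - 1/K - √(I(L;Y)/2)`. -/
theorem fano_type_mutual_information_bound
    (K d : ℕ) (hK : 2 ≤ K) (hd : 1 ≤ d)
    {Ω : Type*} [MeasurableSpace Ω] (P : Measure Ω) [IsProbabilityMeasure P]
    (L : Ω → Fin K) (Y : Ω → (Fin d → ℝ)) (hL : Measurable L) (hY : Measurable Y)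
    (hunif : ∀ ℓ : Fin K, P {ω | L ω = ℓ} = 1 / (K : ℝ≥0∞)) :
    let P' : Measure (Fin K × (Fin d → ℝ)) := P.map (fun ω => (L ω, Y ω))
    let Q : Measure (Fin K × (Fin d → ℝ)) := (P.map L).prod (P.map Y)
    let I : ℝ := ∫ x, Real.log ((P'.rnDeriv Q x).toReal) ∂P'
    1 - 1 / (K : ℝ) - Real.sqrt (I / 2)
      ≤ ⨅ ψ : {ψ : (Fin d → ℝ) → Fin K // Measurable ψ},
          (P {ω | ψ.1 (Y ω) ≠ L ω}).toReal :=
  fano_type_mutual_information_bound_general K d P L Y hL hY hunif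
end

section
/- With f as above and fixed a > 0, as σ → 0 one has f(σ) = (2/π)·(σ⁶/a⁶)·e^{-a²/σ²}·(1 + O(σ²/a²)). Equivalently, in SNR = a²/σ², f = (2/π)·e^{-SNR}·SNR^{-3}·(1 + O(SNR^{-1})) as SNR → ∞. -/
/-!
Put `x = a / (√2 σ)`, so that `σ² / a² = 1 / (2x²)`. Then
`f(σ) = (e^{-x²}/(√π x) - erfc x)²` and `g(σ) = h(x)²` with `h(x) = e^{-x²}/(2√π x³)`, the second
term of the asymptotic series of `erfc`. The two-sided bounds
`e^{-x²}/(√π x) (1 - 1/(2x²)) ≤ erfc x ≤ e^{-x²}/(√π x) (1 - 1/(2x²) + 3/(4x⁴))` put the remainder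
`e^{-x²}/(√π x) - erfc x` between `h(x) (1 - 3/(2x²))` and `h(x)`, so its square is
`h(x)² (1 + O(x⁻²))`. Both bounds come from comparing `∫_x^∞ e^{-t²} dt` with
`∫_x^∞ -(e^{-t²} p(t))' dt = e^{-x²} p(x)` for a truncation `p` of that series.
-/

open Real Filter Topology Asymptotics

/-- The Gauss error function `erf x = (2/√π) ∫₀ˣ e^{-t²} dt`. -/
noncomputable def erf (x : ℝ) : ℝ :=
  (2 / Real.sqrt π) * ∫ t in (0 : ℝ)..x, Real.exp (-t ^ 2)

/-- The complementary error function. -/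
noncomputable def erfc (x : ℝ) : ℝ := 1 - erf x

open MeasureTheory Set

lemma integrable_exp_neg_sq : Integrable fun t : ℝ => exp (-t ^ 2) := by
  simpa using integrable_exp_neg_mul_sq one_pos

lemma erfc_eq_integral_Ioi (x : ℝ) : erfc x = 2 / √π * ∫ t in Ioi x, exp (-t ^ 2) := by
  have hsplit := intervalIntegral.integral_interval_add_Ioi (a := 0) (b := x)
    integrable_exp_neg_sq.integrableOn integrable_exp_neg_sq.integrableOn
  have hhalf : ∫ t in Ioi (0 : ℝ), exp (-t ^ 2) = √π / 2 := by
    simpa using integral_gaussian_Ioi 1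
  have hπ : √π ≠ 0 := (sqrt_pos.2 pi_pos).ne'
  rw [hhalf] at hsplit
  rw [erfc, erf, eq_sub_of_add_eq' hsplit]
  field_simp

section GaussianTail

variable {p p' : ℝ → ℝ} {x : ℝ}

lemma hasDerivAt_neg_exp_neg_sq_mul {t : ℝ} (hp : HasDerivAt p (p' t) t) :
    HasDerivAt (fun t => -(exp (-t ^ 2) * p t)) (exp (-t ^ 2) * (2 * t * p t - p' t)) t := by
  have he : HasDerivAt (fun t : ℝ => exp (-t ^ 2)) (exp (-t ^ 2) * -(2 * t)) t := by
    simpa using ((hasDerivAt_pow 2 t).neg).exp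
  exact (he.mul hp).neg.congr_deriv (by ring)

lemma tendsto_neg_exp_neg_sq_mul (hp : Tendsto p atTop (𝓝 0)) :
    Tendsto (fun t => -(exp (-t ^ 2) * p t)) atTop (𝓝 0) := by
  have he : Tendsto (fun t : ℝ => exp (-t ^ 2)) atTop (𝓝 0) :=
    tendsto_exp_atBot.comp <| tendsto_neg_atTop_atBot.comp (tendsto_pow_atTop two_ne_zero)
  simpa using (he.mul hp).neg

lemma integral_Ioi_exp_neg_sq_mul_eq (hp : ∀ t ∈ Ici x, HasDerivAt p (p' t) t)
    (hlim : Tendsto p atTop (𝓝 0)) (hpos : ∀ t ∈ Ioi x, 0 ≤ 2 * t * p t - p' t) :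
    IntegrableOn (fun t => exp (-t ^ 2) * (2 * t * p t - p' t)) (Ioi x) ∧
      ∫ t in Ioi x, exp (-t ^ 2) * (2 * t * p t - p' t) = exp (-x ^ 2) * p x := by
  have hd := fun t ht => hasDerivAt_neg_exp_neg_sq_mul (hp t ht)
  have hnn : ∀ t ∈ Ioi x, 0 ≤ exp (-t ^ 2) * (2 * t * p t - p' t) :=
    fun t ht => mul_nonneg (exp_pos _).le (hpos t ht)
  refine ⟨integrableOn_Ioi_deriv_of_nonneg' hd hnn (tendsto_neg_exp_neg_sq_mul hlim), ?_⟩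
  rw [integral_Ioi_of_hasDerivAt_of_nonneg' hd hnn (tendsto_neg_exp_neg_sq_mul hlim)]
  ring

lemma integral_Ioi_exp_neg_sq_le (hp : ∀ t ∈ Ici x, HasDerivAt p (p' t) t)
    (hlim : Tendsto p atTop (𝓝 0)) (hle : ∀ t ∈ Ioi x, 1 ≤ 2 * t * p t - p' t) :
    ∫ t in Ioi x, exp (-t ^ 2) ≤ exp (-x ^ 2) * p x := by
  obtain ⟨hint, heq⟩ :=
    integral_Ioi_exp_neg_sq_mul_eq hp hlim fun t ht => zero_le_one.trans (hle t ht)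
  rw [← heq]
  refine setIntegral_mono_on integrable_exp_neg_sq.integrableOn hint measurableSet_Ioi
    fun t ht => ?_
  simpa using mul_le_mul_of_nonneg_left (hle t ht) (exp_pos (-t ^ 2)).le

lemma exp_neg_sq_mul_le_integral_Ioi (hp : ∀ t ∈ Ici x, HasDerivAt p (p' t) t)
    (hlim : Tendsto p atTop (𝓝 0)) (hpos : ∀ t ∈ Ioi x, 0 ≤ 2 * t * p t - p' t)
    (hle : ∀ t ∈ Ioi x, 2 * t * p t - p' t ≤ 1) :
    exp (-x ^ 2) * p x ≤ ∫ t in Ioi x, exp (-t ^ 2) := by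
  obtain ⟨hint, heq⟩ := integral_Ioi_exp_neg_sq_mul_eq hp hlim hpos
  rw [← heq]
  refine setIntegral_mono_on hint integrable_exp_neg_sq.integrableOn measurableSet_Ioi
    fun t ht => ?_
  simpa using mul_le_mul_of_nonneg_left (hle t ht) (exp_pos (-t ^ 2)).le

end GaussianTail

/-- Truncation of the asymptotic series
`e^{x²} ∫_x^∞ e^{-t²} dt ~ (1 - 1/(2x²) + 3/(4x⁴) - …)/(2x)`, with `c` in place of the `3`. -/
noncomputable def erfcTailPoly (c t : ℝ) : ℝ := (1 - 1 / (2 * t ^ 2) + c / (4 * t ^ 4)) / (2 * t)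

lemma hasDerivAt_erfcTailPoly (c : ℝ) {t : ℝ} (ht : t ≠ 0) :
    HasDerivAt (erfcTailPoly c) (-1 / (2 * t ^ 2) + 3 / (4 * t ^ 4) - 5 * c / (8 * t ^ 6)) t := by
  have h1 := (hasDerivAt_id t).const_mul 2
  have h2 := (hasDerivAt_pow 2 t).const_mul 2
  have h4 := (hasDerivAt_pow 4 t).const_mul 4
  exact ((((hasDerivAt_const t 1).sub ((hasDerivAt_const t 1).div h2 (by positivity))).add
    ((hasDerivAt_const t c).div h4 (by positivity))).div h1 (by simpa using ht)).congr_deriv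
    (by simp only [Pi.add_apply, Pi.sub_apply, Pi.div_apply, id]; field_simp; ring)

lemma tendsto_erfcTailPoly (c : ℝ) : Tendsto (erfcTailPoly c) atTop (𝓝 0) := by
  have h2 : Tendsto (fun t : ℝ => 2 * t ^ 2) atTop atTop :=
    (tendsto_pow_atTop two_ne_zero).const_mul_atTop two_pos
  have h4 : Tendsto (fun t : ℝ => 4 * t ^ 4) atTop atTop :=
    (tendsto_pow_atTop four_ne_zero).const_mul_atTop four_pos
  have h1 : Tendsto (fun t : ℝ => 2 * t) atTop atTop := tendsto_id.const_mul_atTop two_pos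
  exact ((tendsto_const_nhds.sub (tendsto_const_nhds.div_atTop h2)).add
    (tendsto_const_nhds.div_atTop h4)).div_atTop h1

lemma two_mul_mul_erfcTailPoly_sub_deriv (c : ℝ) {t : ℝ} (ht : t ≠ 0) :
    2 * t * erfcTailPoly c t - (-1 / (2 * t ^ 2) + 3 / (4 * t ^ 4) - 5 * c / (8 * t ^ 6))
      = 1 + (c - 3) / (4 * t ^ 4) + 5 * c / (8 * t ^ 6) := by
  unfold erfcTailPoly
  field_simp
  ring

lemma erfc_le {x : ℝ} (hx : 0 < x) :
    erfc x ≤ exp (-x ^ 2) / (√π * x) * (1 - 1 / (2 * x ^ 2) + 3 / (4 * x ^ 4)) := by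
  have hbound : ∫ t in Ioi x, exp (-t ^ 2) ≤ exp (-x ^ 2) * erfcTailPoly 3 x := by
    refine integral_Ioi_exp_neg_sq_le
      (fun t ht => hasDerivAt_erfcTailPoly 3 (hx.trans_le ht).ne') (tendsto_erfcTailPoly 3)
      fun t ht => ?_
    rw [two_mul_mul_erfcTailPoly_sub_deriv 3 (hx.trans ht).ne']
    have : 0 < t := hx.trans ht
    rw [sub_self, zero_div, add_zero]
    exact le_add_of_nonneg_right (by positivity)
  calc erfc x ≤ 2 / √π * (exp (-x ^ 2) * erfcTailPoly 3 x) := by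
        rw [erfc_eq_integral_Ioi]; gcongr
    _ = _ := by unfold erfcTailPoly; field_simp

lemma le_erfc {x : ℝ} (hx : 1 ≤ x) :
    exp (-x ^ 2) / (√π * x) * (1 - 1 / (2 * x ^ 2)) ≤ erfc x := by
  have hbound : exp (-x ^ 2) * erfcTailPoly 0 x ≤ ∫ t in Ioi x, exp (-t ^ 2) := by
    have hderiv : ∀ t ∈ Ioi x,
        2 * t * erfcTailPoly 0 t - (-1 / (2 * t ^ 2) + 3 / (4 * t ^ 4) - 5 * 0 / (8 * t ^ 6))
          = 1 - 3 / (4 * t ^ 4) := fun t ht => by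
      rw [two_mul_mul_erfcTailPoly_sub_deriv 0 (by linarith [mem_Ioi.1 ht])]; ring
    have h4 : ∀ t ∈ Ioi x, 0 ≤ 3 / (4 * t ^ 4) ∧ 3 / (4 * t ^ 4) ≤ 1 := fun t ht => by
      have : 1 ≤ t ^ 4 := one_le_pow₀ (hx.trans (mem_Ioi.1 ht).le)
      exact ⟨by positivity, by rw [div_le_one (by positivity)]; linarith⟩
    refine exp_neg_sq_mul_le_integral_Ioi
      (fun t ht => hasDerivAt_erfcTailPoly 0 (by linarith [mem_Ici.1 ht]))
      (tendsto_erfcTailPoly 0) (fun t ht => ?_) fun t ht => ?_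
    · rw [hderiv t ht]; linarith [h4 t ht]
    · rw [hderiv t ht]; linarith [h4 t ht]
  calc exp (-x ^ 2) / (√π * x) * (1 - 1 / (2 * x ^ 2))
      = 2 / √π * (exp (-x ^ 2) * erfcTailPoly 0 x) := by unfold erfcTailPoly; field_simp; ring
    _ ≤ erfc x := by rw [erfc_eq_integral_Ioi]; gcongr

lemma abs_sq_sub_sq_le_of_le_of_le {R : Type*} [CommRing R] [LinearOrder R]
    [IsStrictOrderedRing R] {r h ε : R} (hh : 0 ≤ h) (hε : ε ≤ 1)
    (hlo : h * (1 - ε) ≤ r) (hhi : r ≤ h) : |r ^ 2 - h ^ 2| ≤ 2 * ε * h ^ 2 := by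
  have hr : 0 ≤ r := (mul_nonneg hh (sub_nonneg.2 hε)).trans hlo
  have hdiff : h - r ≤ ε * h := by linarith
  rw [abs_sub_comm, abs_of_nonneg (by nlinarith)]
  nlinarith [mul_le_mul hdiff (show h + r ≤ 2 * h by linarith) (by linarith) (by linarith)]

lemma abs_sq_sub_erfc_sub_sq_le {x : ℝ} (hx0 : 0 < x) (hx : 3 / 2 ≤ x ^ 2) :
    |(exp (-x ^ 2) / (√π * x) - erfc x) ^ 2 - (exp (-x ^ 2) / (2 * √π * x ^ 3)) ^ 2|
      ≤ 3 / x ^ 2 * (exp (-x ^ 2) / (2 * √π * x ^ 3)) ^ 2 := by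
  set M := exp (-x ^ 2) / (√π * x) with hM
  have hh : exp (-x ^ 2) / (2 * √π * x ^ 3) = M / (2 * x ^ 2) := by rw [hM]; field_simp
  have hlo : M / (2 * x ^ 2) * (1 - 3 / (2 * x ^ 2)) ≤ M - erfc x := by
    have e : M / (2 * x ^ 2) * (1 - 3 / (2 * x ^ 2))
        = M - M * (1 - 1 / (2 * x ^ 2) + 3 / (4 * x ^ 4)) := by field_simp; ring
    linarith [erfc_le hx0]
  have hhi : M - erfc x ≤ M / (2 * x ^ 2) := by
    have e : M / (2 * x ^ 2) = M - M * (1 - 1 / (2 * x ^ 2)) := by ring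
    linarith [le_erfc (show 1 ≤ x by nlinarith)]
  rw [hh]
  refine (abs_sq_sub_sq_le_of_le_of_le (by positivity) ?_ hlo hhi).trans_eq (by ring)
  rw [div_le_one (by positivity)]
  linarith

lemma sq_eq_of_eq_div_sqrt_two_mul {a σ x : ℝ} (hx : x = a / (√2 * σ)) :
    x ^ 2 = a ^ 2 / (2 * σ ^ 2) := by
  rw [hx, div_pow, mul_pow, sq_sqrt zero_le_two]

lemma one_div_sq_mul_sub_mul_erfc_sq_eq {a σ x : ℝ} (ha : 0 < a) (hσ : 0 < σ)
    (hx : x = a / (√2 * σ)) :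
    1 / a ^ 2 * (√(2 / π) * σ * exp (-a ^ 2 / (2 * σ ^ 2)) - a * erfc (a / (√2 * σ))) ^ 2
      = (exp (-x ^ 2) / (√π * x) - erfc x) ^ 2 := by
  have hx0 : 0 < x := hx ▸ by positivity
  have hK : √(2 / π) * σ = a / (√π * x) := by
    rw [sqrt_div zero_le_two, hx]; field_simp
  rw [hK, ← hx, show -a ^ 2 / (2 * σ ^ 2) = -x ^ 2 by rw [sq_eq_of_eq_div_sqrt_two_mul hx]; ring]
  field_simp

lemma two_div_pi_mul_exp_eq {a σ x : ℝ} (ha : 0 < a) (hσ : 0 < σ) (hx : x = a / (√2 * σ)) :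
    2 / π * (σ ^ 6 / a ^ 6) * exp (-a ^ 2 / σ ^ 2) = (exp (-x ^ 2) / (2 * √π * x ^ 3)) ^ 2 := by
  have hx0 : 0 < x := hx ▸ by positivity
  have hx2 := sq_eq_of_eq_div_sqrt_two_mul hx
  have hE : exp (-a ^ 2 / σ ^ 2) = exp (-x ^ 2) ^ 2 := by
    rw [← exp_nat_mul, hx2]; congr 1; field_simp; ring
  have hs : σ ^ 6 / a ^ 6 = 1 / (8 * x ^ 6) := by
    rw [show x ^ 6 = (x ^ 2) ^ 3 by ring, hx2]; field_simp; ring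
  rw [hE, hs]
  field_simp
  rw [sq_sqrt pi_pos.le]
  ring

/-- high-SNR asymptotics of the normalized hard-assignment error:
with `f(σ) = (1/a²)(√(2/π)·σ·e^{-a²/(2σ²)} - a·erfc(a/(√2σ)))²`, as `σ → 0⁺`
`f(σ) = (2/π)·(σ⁶/a⁶)·e^{-a²/σ²}·(1 + O(σ²/a²))`. -/
theorem hard_assignment_error_high_snr_asymptotics
    (a : ℝ) (ha : 0 < a) :
    let f : ℝ → ℝ := fun σ =>
      (1 / a ^ 2) * (Real.sqrt (2 / π) * σ * Real.exp (-a ^ 2 / (2 * σ ^ 2))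
        - a * erfc (a / (Real.sqrt 2 * σ))) ^ 2
    let g : ℝ → ℝ := fun σ => (2 / π) * (σ ^ 6 / a ^ 6) * Real.exp (-a ^ 2 / σ ^ 2)
    (fun σ => f σ - g σ) =O[nhdsWithin 0 (Set.Ioi 0)] fun σ => (σ ^ 2 / a ^ 2) * g σ := by
  intro f g
  refine IsBigO.of_bound 6 ?_
  filter_upwards [Ioo_mem_nhdsGT (half_pos ha)] with σ ⟨hσ, hσa⟩
  obtain ⟨x, hx⟩ : ∃ x, x = a / (√2 * σ) := ⟨_, rfl⟩
  have hx0 : 0 < x := hx ▸ by positivity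
  have hx2 := sq_eq_of_eq_div_sqrt_two_mul hx
  have hs : σ ^ 2 / a ^ 2 = 1 / (2 * x ^ 2) := by rw [hx2]; field_simp
  have hx32 : 3 / 2 ≤ x ^ 2 := by rw [hx2, le_div_iff₀ (by positivity)]; nlinarith
  simp only [f, g, norm_eq_abs]
  rw [one_div_sq_mul_sub_mul_erfc_sq_eq ha hσ hx, two_div_pi_mul_exp_eq ha hσ hx, hs,
    abs_of_nonneg (show 0 ≤ 1 / (2 * x ^ 2) * _ by positivity)]
  exact (abs_sq_sub_erfc_sub_sq_le hx0 hx32).trans_eq (by ring)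
end
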